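/- arXiv:1106.1399 — 2 statements merged into one kernel-verified Lean document; each statement's English description precedes it below -/
import Mathlib

section
/- Let 1 ≤ k ≤ n and let U ⊆ W be a k-dimensional subspace with U ∩ span(w_{k+1},…,w_{2n}) = 0. Then there exist unique matrices A, B of size (n−k)×k and C of size k×k over ℂ such that U is spanned by the vectors u_a = w_a + Σ_{r=1}^{n−k} A_{r,a} w_{k+r} + Σ_{r=1}^{n−k} B_{r,a} w_{n+r} + Σ_{b=1}^{k} C_{b,a} w_{2n−k+b} for a = 1,…,k. Moreover, for pr_{1,3} the projection killing the coordinates of w_{k+1},…,w_{2n−k}, the subspace pr_{1,3}(U) is isotropic if and only if C is symmetric with respect to the antidiagonal, i.e. C_{b,a} = C_{k+1−a, k+1−b} for all 1 ≤ a, b ≤ k. -/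
noncomputable section

/-- The ambient 2n-dimensional complex vector space `W = ℂ^{2n}`. -/
abbrev Wsp (n : ℕ) := Fin (2*n) → ℂ

/-- The basis vector `w_k` (1-based index `k ∈ {1,…,2n}`). -/
def wvec (n k : ℕ) : Wsp n := fun i => if (i : ℕ) + 1 = k then 1 else 0

/-- The standard symplectic form: `⟨w_i, w_{2n+1-i}⟩ = 1` for `1 ≤ i ≤ n`,
and `⟨w_i, w_j⟩ = 0` for `j ≠ 2n+1-i`. -/
def sform (n : ℕ) (x y : Wsp n) : ℂ :=
  ∑ i : Fin (2*n), (if (i : ℕ) < n then 1 else -1) * x i *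
    y ⟨2*n - 1 - (i : ℕ), by have := i.isLt; omega⟩

/-- A subspace is isotropic if the symplectic form vanishes on it. -/
def IsIsotropic (n : ℕ) (U : Submodule ℂ (Wsp n)) : Prop :=
  ∀ u ∈ U, ∀ v ∈ U, sform n u v = 0

/-- The projection `pr_k` along `w_k` (1-based). -/
def prj (n k : ℕ) : Wsp n →ₗ[ℂ] Wsp n where
  toFun x := fun i => if (i : ℕ) + 1 = k then 0 else x i
  map_add' x y := by funext i; by_cases h : (i : ℕ) + 1 = k <;> simp [h]
  map_smul' c x := by funext i; by_cases h : (i : ℕ) + 1 = k <;> simp [h]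

/-- The subspace `W_{i,j} = span(w_1,…,w_i,w_{j+1},…,w_{2n})` (1-based). -/
def WIJ (n i j : ℕ) : Submodule ℂ (Wsp n) :=
  Submodule.span ℂ (wvec n '' {k | (1 ≤ k ∧ k ≤ i) ∨ (j + 1 ≤ k ∧ k ≤ 2*n)})

/-- Orthogonal complement with respect to the symplectic form. -/
def sperp (n : ℕ) (U : Submodule ℂ (Wsp n)) : Submodule ℂ (Wsp n) where
  carrier := {x | ∀ u ∈ U, sform n x u = 0}
  zero_mem' := by intro u hu; simp [sform]
  add_mem' := by
    intro a b ha hb u hu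
    have ha' := ha u hu
    have hb' := hb u hu
    simp only [sform, Pi.add_apply, add_mul, mul_add, Finset.sum_add_distrib] at *
    rw [ha', hb', add_zero]
  smul_mem' := by
    intro c a ha u hu
    have ha' := ha u hu
    simp only [sform, Pi.smul_apply, smul_eq_mul] at *
    calc ∑ i : Fin (2*n), (if (i : ℕ) < n then 1 else -1) * (c * a i) *
          u ⟨2*n - 1 - (i : ℕ), by have := i.isLt; omega⟩
        = c * ∑ i : Fin (2*n), (if (i : ℕ) < n then 1 else -1) * a i *
          u ⟨2*n - 1 - (i : ℕ), by have := i.isLt; omega⟩ := by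
          rw [Finset.mul_sum]; congr 1; funext i; ring
      _ = 0 := by rw [ha', mul_zero]

/-- The points of the Bott–Samelson type resolution `SpR_{2n}`:
collections `(V_{i,j})` for `1 ≤ i ≤ j`, `i+j ≤ 2n`. -/
structure IsSpR (n : ℕ) (V : ℕ → ℕ → Submodule ℂ (Wsp n)) : Prop where
  dim : ∀ i j, 1 ≤ i → i ≤ j → i + j ≤ 2*n → Module.finrank ℂ (V i j) = i
  sub : ∀ i j, 1 ≤ i → i ≤ j → i + j ≤ 2*n → V i j ≤ WIJ n i j
  mono : ∀ i j, 1 ≤ i → i + 1 ≤ j → (i + 1) + j ≤ 2*n → V i j ≤ V (i+1) j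
  proj : ∀ i j, 1 ≤ i → i ≤ j → i + (j+1) ≤ 2*n →
    Submodule.map (prj n (j+1)) (V i j) ≤ V i (j+1)
  isot : ∀ i, 1 ≤ i → i ≤ n → IsIsotropic n (V i (2*n - i))

/-- A point of `SpR_{2n}` lies in the divisor `Z_{i,j}` if
`V_{i,j} = V_{i-1,j+1} + ℂ w_{j+1}` (with `V_0 = 0`). -/
def InZ (n : ℕ) (V : ℕ → ℕ → Submodule ℂ (Wsp n)) (i j : ℕ) : Prop :=
  V i j = (if i = 1 then ⊥ else V (i-1) (j+1)) ⊔ Submodule.span ℂ {wvec n (j+1)}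

/-- The projection `pr_{1,3}` onto `span(w_1,…,w_k,w_{2n-k+1},…,w_{2n})`,
killing the coordinates of `w_{k+1},…,w_{2n-k}`. -/
def pr13 (n k : ℕ) : Wsp n →ₗ[ℂ] Wsp n where
  toFun x := fun i => if k + 1 ≤ (i : ℕ) + 1 ∧ (i : ℕ) + 1 ≤ 2*n - k then 0 else x i
  map_add' x y := by
    funext i
    by_cases h : k + 1 ≤ (i : ℕ) + 1 ∧ (i : ℕ) + 1 ≤ 2*n - k
    · simp only [Pi.add_apply, if_pos h, add_zero]
    · simp only [Pi.add_apply, if_neg h]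
  map_smul' c x := by
    funext i
    by_cases h : k + 1 ≤ (i : ℕ) + 1 ∧ (i : ℕ) + 1 ≤ 2*n - k
    · simp only [Pi.smul_apply, smul_eq_mul, if_pos h, mul_zero, RingHom.id_apply]
    · simp only [Pi.smul_apply, smul_eq_mul, if_neg h, RingHom.id_apply]

/-- The vectors `u_a = w_a + Σ_r A_{r,a} w_{k+r} + Σ_r B_{r,a} w_{n+r} + Σ_b C_{b,a} w_{2n-k+b}`
(all indices 1-based; here `a : Fin k` etc. are 0-based, so `a` stands for `a+1`). -/
def uvec (n k : ℕ) (A B : Matrix (Fin (n - k)) (Fin k) ℂ) (C : Matrix (Fin k) (Fin k) ℂ)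
    (a : Fin k) : Wsp n :=
  wvec n ((a : ℕ) + 1)
    + ∑ r : Fin (n - k), A r a • wvec n (k + ((r : ℕ) + 1))
    + ∑ r : Fin (n - k), B r a • wvec n (n + ((r : ℕ) + 1))
    + ∑ b : Fin k, C b a • wvec n (2*n - k + ((b : ℕ) + 1))

/-!
Restricting a vector to its first `k` coordinates is injective on `U`, its kernel being
`U ∩ span(w_{k+1}, …, w_{2n}) = 0`, hence bijective since `dim U = k`. The preimages of the
standard basis vectors are then the unique basis of `U` of the shape `u_a`, and `A`, `B`, `C` are
read off from their remaining coordinates.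

`pr_{1,3}` sends `u_a` to `w_a + Σ_b C_{b,a} w_{2n-k+b}`, and on two such vectors the symplectic
form only sees the pairing of `w_a` with `w_{2n+1-a}`:
`⟨pr_{1,3} u_a, pr_{1,3} u_c⟩ = C_{k+1-a,c} - C_{k+1-c,a}`.
-/

lemma wvec_apply (n m : ℕ) (i : Fin (2*n)) : wvec n m i = if (i : ℕ) + 1 = m then 1 else 0 := rfl

lemma sum_smul_wvec_apply (n s m : ℕ) (c : Fin m → ℂ) (i : Fin (2*n)) :
    (∑ r : Fin m, c r • wvec n (s + ((r : ℕ) + 1))) i =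
      if h : s ≤ i ∧ (i : ℕ) < s + m then c ⟨i - s, by omega⟩ else 0 := by
  simp only [Finset.sum_apply, Pi.smul_apply, wvec_apply, smul_eq_mul, mul_ite, mul_one, mul_zero]
  split_ifs with h
  · have hr (r : Fin m) : (i : ℕ) + 1 = s + (r + 1) ↔ r = ⟨i - s, by omega⟩ := by
      simp only [Fin.ext_iff]; omega
    simp only [hr, Finset.sum_ite_eq', Finset.mem_univ, if_true]
  · exact Finset.sum_eq_zero fun r _ => if_neg (by omega)

section UvecCoordinates

variable {n k : ℕ} (hkn : k ≤ n)
include hkn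

lemma uvec_apply (A B : Matrix (Fin (n - k)) (Fin k) ℂ)
    (C : Matrix (Fin k) (Fin k) ℂ) (a : Fin k) (i : Fin (2*n)) :
    uvec n k A B C a i =
      if h₀ : (i : ℕ) < k then (if (i : ℕ) = a then 1 else 0)
      else if h₁ : (i : ℕ) < n then A ⟨i - k, by omega⟩ a
      else if h₂ : (i : ℕ) < 2*n - k then B ⟨i - n, by omega⟩ a
      else C ⟨i - (2*n - k), by omega⟩ a := by
  simp only [uvec, Pi.add_apply, sum_smul_wvec_apply, wvec_apply]
  have := a.isLt
  have := i.isLt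
  split_ifs <;> first | omega | simp

lemma uvec_apply_of_lt (A B : Matrix (Fin (n - k)) (Fin k) ℂ) (C : Matrix (Fin k) (Fin k) ℂ)
    (a : Fin k) (i : Fin (2*n)) (hi : (i : ℕ) < k) :
    uvec n k A B C a i = if (i : ℕ) = a then 1 else 0 := by
  simp [uvec_apply hkn, hi]

lemma uvec_apply_rev (A B : Matrix (Fin (n - k)) (Fin k) ℂ)
    (C : Matrix (Fin k) (Fin k) ℂ) (a b : Fin k) :
    uvec n k A B C a ⟨2*n - 1 - b, by omega⟩ = C b.rev a := by
  have hb := b.isLt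
  simp only [uvec_apply hkn]
  rw [dif_neg (by omega), dif_neg (by omega), dif_neg (by omega)]
  congr 1
  ext
  simp only [Fin.val_rev]
  omega

lemma uvec_injective {A B A' B' : Matrix (Fin (n - k)) (Fin k) ℂ}
    {C C' : Matrix (Fin k) (Fin k) ℂ} (h : uvec n k A B C = uvec n k A' B' C') :
    A = A' ∧ B = B' ∧ C = C' := by
  have entry (a : Fin k) (m : ℕ) (hm : m < 2*n) := congr_fun (congr_fun h a) ⟨m, hm⟩
  simp only [uvec_apply hkn] at entry
  refine ⟨?_, ?_, ?_⟩ <;> ext r a <;> have hr := r.isLt <;>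
    [have he := entry a (k + r) (by omega); have he := entry a (n + r) (by omega);
      have he := entry a (2*n - k + r) (by omega)] <;>
    split_ifs at he <;> first | omega | simpa using he

lemma uvec_eq_of_apply_of_lt (v : Fin k → Wsp n)
    (hv : ∀ a (i : Fin (2*n)), (i : ℕ) < k → v a i = if (i : ℕ) = a then 1 else 0) :
    uvec n k (.of fun r a => v a ⟨k + r, by omega⟩) (.of fun r a => v a ⟨n + r, by omega⟩)
      (.of fun b a => v a ⟨2*n - k + b, by omega⟩) = v := by
  funext a i
  by_cases h₀ : (i : ℕ) < k
  · rw [uvec_apply_of_lt hkn _ _ _ _ _ h₀, hv a i h₀]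
  rw [uvec_apply hkn, dif_neg h₀]
  split_ifs <;> simp only [Matrix.of_apply] <;> congr 1 <;> ext <;> simp only <;> omega

lemma pr13_comp_uvec (A B : Matrix (Fin (n - k)) (Fin k) ℂ) (C : Matrix (Fin k) (Fin k) ℂ) :
    pr13 n k ∘ uvec n k A B C = uvec n k 0 0 C := by
  funext a i
  simp only [Function.comp_apply, pr13, LinearMap.coe_mk, AddHom.coe_mk, uvec_apply hkn]
  split_ifs <;> first | omega | simp

end UvecCoordinates

lemma mem_WIJ_zero_of_apply_eq_zero {n k : ℕ} {x : Wsp n}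
    (hx : ∀ i : Fin (2*n), (i : ℕ) < k → x i = 0) : x ∈ WIJ n 0 k := by
  rw [← Finset.univ_sum_single x]
  refine Submodule.sum_mem _ fun i _ => ?_
  by_cases hi : (i : ℕ) < k
  · simp [hx i hi]
  · have hsingle : Pi.single i (x i) = x i • wvec n (i + 1) := by
      ext j
      simp [wvec_apply, Pi.single_apply, Fin.ext_iff]
    rw [hsingle]
    exact Submodule.smul_mem _ _ (Submodule.subset_span ⟨i + 1, Or.inr ⟨by omega, i.isLt⟩, rfl⟩)

section Transversal

variable {n k : ℕ} {U : Submodule ℂ (Wsp n)} (hU : U ⊓ WIJ n 0 k = ⊥)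
include hU

lemma eq_of_mem_of_apply_eq {x y : Wsp n} (hx : x ∈ U) (hy : y ∈ U)
    (h : ∀ i : Fin (2*n), (i : ℕ) < k → x i = y i) : x = y := by
  have hxy : x - y ∈ U ⊓ WIJ n 0 k :=
    ⟨U.sub_mem hx hy, mem_WIJ_zero_of_apply_eq_zero fun i hi => sub_eq_zero.mpr (h i hi)⟩
  rw [hU] at hxy
  exact sub_eq_zero.mp hxy

lemma exists_mem_apply_eq (hk : k ≤ 2*n) (hdim : Module.finrank ℂ U = k) (f : Fin k → ℂ) :
    ∃ x ∈ U, ∀ (i : Fin (2*n)) (hi : (i : ℕ) < k), x i = f ⟨i, hi⟩ := by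
  let π := (LinearMap.funLeft ℂ ℂ (Fin.castLE hk)).domRestrict U
  have hinj : Function.Injective π := fun x y hxy =>
    Subtype.ext (eq_of_mem_of_apply_eq hU x.2 y.2 fun i hi => congr_fun hxy ⟨i, hi⟩)
  obtain ⟨x, hx⟩ := (LinearMap.injective_iff_surjective_of_finrank_eq_finrank
    (by simp [hdim])).mp hinj f
  exact ⟨x, x.2, fun i hi => congr_fun hx ⟨i, hi⟩⟩

lemma span_range_eq_of_apply (hk : k ≤ 2*n) {v : Fin k → Wsp n} (hvU : ∀ a, v a ∈ U)
    (hv : ∀ a (i : Fin (2*n)), (i : ℕ) < k → v a i = if (i : ℕ) = a then 1 else 0) :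
    Submodule.span ℂ (Set.range v) = U := by
  refine le_antisymm (Submodule.span_le.mpr (Set.range_subset_iff.mpr hvU)) fun x hx => ?_
  have hsum : x = ∑ a, x (Fin.castLE hk a) • v a := by
    refine eq_of_mem_of_apply_eq hU hx (U.sum_mem fun a _ => U.smul_mem _ (hvU a)) fun i hi => ?_
    simp only [Finset.sum_apply, Pi.smul_apply, hv _ i hi, smul_eq_mul, mul_ite, mul_one, mul_zero]
    rw [Finset.sum_eq_single_of_mem ⟨i, hi⟩ (Finset.mem_univ _)
      fun b _ hb => if_neg fun h => hb (Fin.ext h.symm)]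
    simp
  rw [hsum]
  exact Submodule.sum_mem _ fun a _ => Submodule.smul_mem _ _ (Submodule.subset_span ⟨a, rfl⟩)

end Transversal

def sformBilin (n : ℕ) : LinearMap.BilinForm ℂ (Wsp n) :=
  LinearMap.mk₂ ℂ (sform n)
    (fun _ _ _ => by
      simp only [sform, Pi.add_apply, ← Finset.sum_add_distrib]
      exact Finset.sum_congr rfl fun _ _ => by ring)
    (fun _ _ _ => by
      simp only [sform, Pi.smul_apply, smul_eq_mul, Finset.mul_sum]
      exact Finset.sum_congr rfl fun _ _ => by ring)
    (fun _ _ _ => by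
      simp only [sform, Pi.add_apply, ← Finset.sum_add_distrib]
      exact Finset.sum_congr rfl fun _ _ => by ring)
    (fun _ _ _ => by
      simp only [sform, Pi.smul_apply, smul_eq_mul, Finset.mul_sum]
      exact Finset.sum_congr rfl fun _ _ => by ring)

lemma Fin.mk_sub_one_sub_eq_rev {k : ℕ} (a : Fin k) (h : k - 1 - (a : ℕ) < k) :
    (⟨k - 1 - a, h⟩ : Fin k) = a.rev :=
  Fin.ext (by simp only [Fin.val_rev]; omega)

lemma isIsotropic_span_iff {n : ℕ} (s : Set (Wsp n)) :
    IsIsotropic n (Submodule.span ℂ s) ↔ ∀ x ∈ s, ∀ y ∈ s, sform n x y = 0 := by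
  refine ⟨fun h x hx y hy => h x (Submodule.subset_span hx) y (Submodule.subset_span hy),
    fun h u hu v hv => ?_⟩
  have hleft (x : Wsp n) (hx : x ∈ s) : Submodule.span ℂ s ≤ LinearMap.ker (sformBilin n x) :=
    Submodule.span_le.mpr fun y hy => h x hx y hy
  have hright : Submodule.span ℂ s ≤ LinearMap.ker ((sformBilin n).flip v) :=
    Submodule.span_le.mpr fun x hx => hleft x hx hv
  exact hright hu

lemma sform_uvec_zero_zero {n k : ℕ} (hkn : k ≤ n) (C : Matrix (Fin k) (Fin k) ℂ) (a c : Fin k) :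
    sform n (uvec n k 0 0 C a) (uvec n k 0 0 C c) = C a.rev c - C c.rev a := by
  have ha := a.isLt
  have hc := c.isLt
  rw [sform, Fintype.sum_eq_add ⟨a, by omega⟩ ⟨2*n - 1 - c, by omega⟩
    (by simp only [ne_eq, Fin.ext_iff]; omega)]
  · have hca : 2*n - 1 - (2*n - 1 - (c : ℕ)) = c := by omega
    simp only [uvec_apply_rev hkn, uvec_apply_of_lt hkn _ _ _ _ ⟨a, _⟩ ha]
    simp [show (a : ℕ) < n by omega, show ¬ 2*n - 1 - (c : ℕ) < n by omega, hca,
      uvec_apply_of_lt hkn _ _ _ _ ⟨c, by omega⟩ hc, sub_eq_add_neg]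
  · rintro i ⟨hia, hic⟩
    have hi := i.isLt
    have hia' : (i : ℕ) ≠ a := fun h => hia (Fin.ext h)
    have hic' : (i : ℕ) ≠ 2*n - 1 - c := fun h => hic (Fin.ext h)
    simp only [uvec_apply hkn]
    split_ifs <;> first | omega | simp

theorem statement1 (n k : ℕ) (hkn : k ≤ n)
    (U : Submodule ℂ (Wsp n)) (hUdim : Module.finrank ℂ U = k)
    (hUcompl : U ⊓ WIJ n 0 k = ⊥) :
    (∃! ABC : Matrix (Fin (n - k)) (Fin k) ℂ × Matrix (Fin (n - k)) (Fin k) ℂ ×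
        Matrix (Fin k) (Fin k) ℂ,
      U = Submodule.span ℂ (Set.range (uvec n k ABC.1 ABC.2.1 ABC.2.2))) ∧
    (∀ (A B : Matrix (Fin (n - k)) (Fin k) ℂ) (C : Matrix (Fin k) (Fin k) ℂ),
      U = Submodule.span ℂ (Set.range (uvec n k A B C)) →
      (IsIsotropic n (Submodule.map (pr13 n k) U) ↔
        ∀ a b : Fin k,
          C b a = C ⟨k - 1 - (a : ℕ), by have := a.isLt; omega⟩
                    ⟨k - 1 - (b : ℕ), by have := b.isLt; omega⟩)) := by
  have hk : k ≤ 2*n := by omega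
  have uvec_mem {A B C} (hU : U = Submodule.span ℂ (Set.range (uvec n k A B C))) (a : Fin k) :
      uvec n k A B C a ∈ U := hU ▸ Submodule.subset_span ⟨a, rfl⟩
  refine ⟨existsUnique_of_exists_of_unique ?_ ?_, fun A B C hU => ?_⟩
  · choose v hvU hv using fun a : Fin k => exists_mem_apply_eq hUcompl hk hUdim (Pi.single a 1)
    have hv' (a) (i : Fin (2*n)) (hi : (i : ℕ) < k) : v a i = if (i : ℕ) = a then 1 else 0 := by
      simp [hv a i hi, Pi.single_apply, Fin.ext_iff]
    exact ⟨(_, _, _), by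
      rw [uvec_eq_of_apply_of_lt hkn v hv', span_range_eq_of_apply hUcompl hk hvU hv']⟩
  · rintro ⟨A, B, C⟩ ⟨A', B', C'⟩ hU hU'
    obtain ⟨rfl, rfl, rfl⟩ := uvec_injective hkn <| funext fun a =>
      eq_of_mem_of_apply_eq hUcompl (uvec_mem hU a) (uvec_mem hU' a) fun i hi => by
        rw [uvec_apply_of_lt hkn _ _ _ _ _ hi, uvec_apply_of_lt hkn _ _ _ _ _ hi]
    rfl
  · simp only [Fin.mk_sub_one_sub_eq_rev]
    rw [hU, Submodule.map_span, ← Set.range_comp, pr13_comp_uvec hkn, isIsotropic_span_iff]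
    simp only [Set.forall_mem_range, sform_uvec_zero_zero hkn, sub_eq_zero]
    exact ⟨fun h a b => by simpa using h b.rev a, fun h a c => by simpa using h c a.rev⟩
end
end

section
/- Let 2 ≤ i ≤ n and let V′ ⊆ W_{i−1,2n−i} = span(w_1,…,w_{i−1},w_{2n−i+1},…,w_{2n}) be an isotropic subspace of dimension i−1, where V′^⊥ = {w ∈ W : ⟨w, v⟩ = 0 for all v ∈ V′}. Then the quotient (V′^⊥ ∩ W_{i,2n−i})/V′ is 2-dimensional, and the map sending V to its image in this quotient is a bijection from the set {V ⊆ W : V′ ⊆ V ⊆ W_{i,2n−i}, dim V = i, V isotropic} onto the set of 1-dimensional subspaces of (V′^⊥ ∩ W_{i,2n−i})/V′. -/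
/-! The coordinate subspace `W_{i,2n-i}` is symplectic of dimension `2i`, so for the isotropic
`V' ⊆ W_{i,2n-i}` the space `V'^⊥ ∩ W_{i,2n-i}` has dimension `2i - (i-1) = i+1` and contains `V'`.
An `i`-dimensional `V` with `V' ⊆ V ⊆ W_{i,2n-i}` is isotropic iff `V ⊆ V'^⊥`: it is then
`V' + ℂx` with `x ⊥ V'` and `⟨x, x⟩ = 0`. The lattice correspondence for the quotient by `V'`
turns these `V` into the lines of `(V'^⊥ ∩ W_{i,2n-i})/V'`. -/

noncomputable section

namespace LinearMap.BilinForm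

open Module Submodule

variable {K E : Type*} [Field K] [AddCommGroup E] [Module K E] [FiniteDimensional K E]
  {B : LinearMap.BilinForm K E}

lemma finrank_orthogonal_inf_add_finrank (hB : B.Nondegenerate) (hB₀ : B.IsRefl)
    {U W : Submodule K E} (hUW : Disjoint U (B.orthogonal W)) :
    finrank K (B.orthogonal U ⊓ W : Submodule K E) + finrank K U = finrank K W := by
  have hsup : B.orthogonal U ⊔ W = ⊤ := by
    have hbot : B.orthogonal (B.orthogonal U ⊔ W) = ⊥ := by
      refine eq_bot_iff.2 (le_trans (le_inf (orthogonal_le le_sup_left)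
        (orthogonal_le le_sup_right)) ?_)
      rw [orthogonal_orthogonal hB hB₀]
      exact hUW.eq_bot.le
    have := finrank_orthogonal hB (B.orthogonal U ⊔ W)
    rw [hbot, finrank_bot] at this
    exact eq_top_of_finrank_eq (by have := finrank_le (B.orthogonal U ⊔ W); omega)
  have hsum := finrank_sup_add_finrank_inf_eq (B.orthogonal U) W
  rw [hsup, finrank_top, finrank_orthogonal hB] at hsum
  have := finrank_le U
  omega

lemma le_orthogonal_self_of_finrank_le_succ (hB : B.IsAlt) {U V : Submodule K E}
    (hU : U ≤ B.orthogonal U) (hUV : U ≤ V) (hVU : V ≤ B.orthogonal U)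
    (hdim : finrank K V ≤ finrank K U + 1) : V ≤ B.orthogonal V := by
  by_cases hVU' : V ≤ U
  · exact hVU'.trans (hU.trans (orthogonal_le hVU'))
  obtain ⟨x, hxV, hxU⟩ := SetLike.not_le_iff_exists.1 hVU'
  have hV : V = U ⊔ K ∙ x := by
    refine (eq_of_le_of_finrank_le (sup_le hUV ((span_singleton_le_iff_mem x V).2 hxV)) ?_).symm
    rw [finrank_sup_span_singleton hxU]
    exact hdim
  have hxU' : ∀ u ∈ U, B u x = 0 := hVU hxV
  have hUx' : ∀ u ∈ U, B x u = 0 := fun u hu => hB.isRefl _ _ (hxU' u hu)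
  rw [hV]
  intro v hv w hw
  obtain ⟨a, ha, _, hc, rfl⟩ := mem_sup.1 hv
  obtain ⟨b, hb, _, hd, rfl⟩ := mem_sup.1 hw
  obtain ⟨c, rfl⟩ := mem_span_singleton.1 hc
  obtain ⟨d, rfl⟩ := mem_span_singleton.1 hd
  simp only [map_add, map_smul, LinearMap.add_apply, LinearMap.smul_apply, smul_eq_mul,
    hU ha b hb, hUx' a ha, hxU' b hb, hB.self_eq_zero]
  ring

end LinearMap.BilinForm

namespace Submodule

open Module

variable {K E : Type*} [Field K] [AddCommGroup E] [Module K E] [FiniteDimensional K E]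
  {p P : Submodule K E}

lemma finrank_map_mkQ_add_finrank (h : p ≤ P) :
    finrank K (P.map p.mkQ) + finrank K p = finrank K P := by
  have h1 := LinearMap.finrank_range_add_finrank_ker (p.mkQ.domRestrict P)
  rwa [LinearMap.range_domRestrict, LinearMap.ker_domRestrict, ker_mkQ,
    (comapSubtypeEquivOfLe h).finrank_eq] at h1

lemma bijOn_map_mkQ (h : p ≤ P) (k : ℕ) :
    Set.BijOn (map p.mkQ) {V | p ≤ V ∧ V ≤ P ∧ finrank K V = finrank K p + k}
      {L | L ≤ P.map p.mkQ ∧ finrank K L = k} := by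
  refine ⟨?_, ?_, ?_⟩
  · rintro V ⟨hpV, hVP, hV⟩
    have := finrank_map_mkQ_add_finrank hpV
    exact ⟨map_mono hVP, by omega⟩
  · rintro V₁ ⟨hpV₁, -⟩ V₂ ⟨hpV₂, -⟩ heq
    have := congrArg (comap p.mkQ) heq
    simpa only [comap_map_mkQ, sup_eq_right.2 hpV₁, sup_eq_right.2 hpV₂] using this
  · rintro L ⟨hLP, hL⟩
    have hmap : (L.comap p.mkQ).map p.mkQ = L := map_comap_eq_of_surjective (mkQ_surjective p) L
    have hpL : p ≤ L.comap p.mkQ := by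
      simpa only [ker_mkQ] using LinearMap.ker_le_comap (f := p.mkQ) (p := L)
    refine ⟨L.comap p.mkQ, ⟨hpL, ?_, ?_⟩, hmap⟩
    · simpa only [comap_map_mkQ, sup_eq_right.2 h] using comap_mono (f := p.mkQ) hLP
    · have := finrank_map_mkQ_add_finrank hpL
      rw [hmap] at this
      omega

end Submodule

lemma sform_eq_sum_rev (n : ℕ) (x y : Wsp n) :
    sform n x y = ∑ t : Fin (2*n), (if (t : ℕ) < n then 1 else -1) * x t * y t.rev := by
  unfold sform
  congr! 3 with t
  ext
  simp only [Fin.val_rev]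
  omega

lemma sform_swap (n : ℕ) (x y : Wsp n) : sform n y x = - sform n x y := by
  rw [sform_eq_sum_rev, sform_eq_sum_rev, ← Finset.sum_neg_distrib]
  refine Fintype.sum_equiv Fin.revPerm _ _ fun t => ?_
  have ht := t.isLt
  simp only [Fin.revPerm_apply, Fin.rev_rev, Fin.val_rev]
  split_ifs <;> first | omega | ring

lemma sform_self (n : ℕ) (x : Wsp n) : sform n x x = 0 := by
  linear_combination sform_swap n x x / 2

lemma sform_single_right (n : ℕ) (x : Wsp n) (t : Fin (2*n)) :
    sform n x (Pi.single t 1) = (if (t.rev : ℕ) < n then 1 else -1) * x t.rev := by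
  rw [sform_eq_sum_rev, Finset.sum_eq_single t.rev]
  · simp
  · intro s _ hs
    rw [Pi.single_apply, if_neg (show s.rev ≠ t from fun h => hs (by rw [← h, Fin.rev_rev])),
      mul_zero]
  · simp

lemma eq_zero_of_sform_single_right {n : ℕ} {x : Wsp n} {t : Fin (2*n)}
    (h : sform n x (Pi.single t.rev 1) = 0) : x t = 0 := by
  rw [sform_single_right, Fin.rev_rev, mul_eq_zero] at h
  exact h.resolve_left (by split_ifs <;> norm_num)

def symplecticForm (n : ℕ) : LinearMap.BilinForm ℂ (Wsp n) :=
  LinearMap.mk₂ ℂ (sform n)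
    (fun x x' y => by
      simp only [sform, Pi.add_apply, ← Finset.sum_add_distrib]; congr 1; funext i; ring)
    (fun c x y => by
      simp only [sform, Pi.smul_apply, smul_eq_mul, Finset.mul_sum]; congr 1; funext i; ring)
    (fun x y y' => by
      simp only [sform, Pi.add_apply, ← Finset.sum_add_distrib]; congr 1; funext i; ring)
    (fun c x y => by
      simp only [sform, Pi.smul_apply, smul_eq_mul, Finset.mul_sum]; congr 1; funext i; ring)

@[simp] lemma symplecticForm_apply (n : ℕ) (x y : Wsp n) : symplecticForm n x y = sform n x y :=
  rfl

lemma symplecticForm_isAlt (n : ℕ) : (symplecticForm n).IsAlt := sform_self n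

lemma symplecticForm_nondegenerate (n : ℕ) : (symplecticForm n).Nondegenerate :=
  LinearMap.BilinForm.Nondegenerate.ofSeparatingLeft fun _ hx =>
    funext fun _ => eq_zero_of_sform_single_right (hx _)

lemma sperp_eq_orthogonal (n : ℕ) (U : Submodule ℂ (Wsp n)) :
    sperp n U = (symplecticForm n).orthogonal U := by
  ext x
  refine forall₂_congr fun u _ => ?_
  rw [symplecticForm_apply, sform_swap, neg_eq_zero]

lemma isIsotropic_iff_le_sperp (n : ℕ) (U : Submodule ℂ (Wsp n)) :
    IsIsotropic n U ↔ U ≤ sperp n U :=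
  Iff.rfl

lemma isIsotropic_iff_le_sperp_of_le {n : ℕ} {V' V : Submodule ℂ (Wsp n)}
    (hV' : IsIsotropic n V') (hV'V : V' ≤ V)
    (hdim : Module.finrank ℂ V ≤ Module.finrank ℂ V' + 1) :
    IsIsotropic n V ↔ V ≤ sperp n V' := by
  simp only [isIsotropic_iff_le_sperp, sperp_eq_orthogonal] at hV' ⊢
  exact ⟨fun hV => hV.trans (LinearMap.BilinForm.orthogonal_le hV'V), fun hV =>
    LinearMap.BilinForm.le_orthogonal_self_of_finrank_le_succ (symplecticForm_isAlt n)
      hV' hV'V hV hdim⟩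

lemma wvec_succ (n : ℕ) (t : Fin (2*n)) : wvec n (t + 1) = Pi.basisFun ℂ (Fin (2*n)) t := by
  ext s
  simp [wvec, Pi.single_apply, Fin.ext_iff]

lemma WIJ_eq_spanSubset (n i j : ℕ) :
    WIJ n i j = Pi.spanSubset ℂ {t : Fin (2*n) | (t : ℕ) < i ∨ j ≤ t} := by
  refine le_antisymm (Submodule.span_le.2 ?_) (Submodule.span_mono ?_)
  · rintro _ ⟨k, hk, rfl⟩
    simp only [Set.mem_ofPred_eq] at hk
    rw [SetLike.mem_coe, Pi.mem_spanSubset_iff]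
    intro t ht
    simp only [Set.mem_ofPred_eq] at ht
    simp only [wvec, ite_eq_right_iff, one_ne_zero, imp_false]
    omega
  · rintro _ ⟨t, ht, rfl⟩
    exact ⟨t + 1, by simp only [Set.mem_ofPred_eq] at ht ⊢; omega, wvec_succ n t⟩

lemma mem_WIJ {n i j : ℕ} {x : Wsp n} :
    x ∈ WIJ n i j ↔ ∀ t : Fin (2*n), i ≤ t → (t : ℕ) < j → x t = 0 := by
  rw [WIJ_eq_spanSubset, Pi.mem_spanSubset_iff]
  refine forall_congr' fun t => ?_
  simp only [Set.mem_ofPred_eq, not_or, not_lt, not_le, and_imp]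

lemma WIJ_mono_left (n j : ℕ) {i i' : ℕ} (h : i ≤ i') : WIJ n i j ≤ WIJ n i' j :=
  fun _ hx => mem_WIJ.2 fun t hi' hj => mem_WIJ.1 hx t (h.trans hi') hj

lemma finrank_WIJ {n i : ℕ} (hi : i ≤ n) : Module.finrank ℂ (WIJ n i (2*n - i)) = 2 * i := by
  rw [WIJ_eq_spanSubset, Pi.dim_spanSubset]
  have hset : {t : Fin (2*n) | (t : ℕ) < i ∨ 2*n - i ≤ t} =
      ↑(Finset.univ.filter (fun t : Fin (2*n) => (t : ℕ) < i) ∪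
        Finset.univ.filter (fun t : Fin (2*n) => ¬ (t : ℕ) < 2*n - i)) := by
    ext t
    simp
  rw [hset, Set.ncard_coe_finset, Finset.card_union_of_disjoint, Finset.filter_not,
    Finset.card_sdiff_of_subset (Finset.filter_subset _ _), Finset.card_univ, Fintype.card_fin,
    Fin.card_filter_val_lt, Fin.card_filter_val_lt]
  · omega
  · exact Finset.disjoint_filter.2 fun t _ h1 h2 => by omega

lemma disjoint_WIJ_orthogonal (n i : ℕ) :
    Disjoint (WIJ n i (2*n - i)) ((symplecticForm n).orthogonal (WIJ n i (2*n - i))) := by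
  refine Submodule.disjoint_def.2 fun x hxW hxW' => funext fun t => ?_
  by_cases ht : i ≤ (t : ℕ) ∧ (t : ℕ) < 2*n - i
  · exact mem_WIJ.1 hxW t ht.1 ht.2
  · have hsingle : Pi.single t.rev (1 : ℂ) ∈ WIJ n i (2*n - i) := by
      refine mem_WIJ.2 fun s hs1 hs2 => Pi.single_eq_of_ne (fun hst => ht ?_) _
      have := congrArg Fin.val hst
      simp only [Fin.val_rev] at this
      omega
    have hpair := hxW' _ hsingle
    rw [symplecticForm_apply, sform_swap, neg_eq_zero] at hpair
    exact eq_zero_of_sform_single_right hpair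

theorem statement2_general (n i : ℕ) (hi2 : 2 ≤ i) (hin : i ≤ n)
    (V' : Submodule ℂ (Wsp n)) (hV'sub : V' ≤ WIJ n (i - 1) (2*n - i))
    (hV'dim : Module.finrank ℂ V' = i - 1) (hV'iso : IsIsotropic n V') :
    Module.finrank ℂ
        (Submodule.map V'.mkQ (sperp n V' ⊓ WIJ n i (2*n - i))) = 2 ∧
      Set.BijOn (fun V : Submodule ℂ (Wsp n) => Submodule.map V'.mkQ V)
        {V | V' ≤ V ∧ V ≤ WIJ n i (2*n - i) ∧ Module.finrank ℂ V = i ∧ IsIsotropic n V}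
        {L | L ≤ Submodule.map V'.mkQ (sperp n V' ⊓ WIJ n i (2*n - i)) ∧
          Module.finrank ℂ L = 1} := by
  have hV'W : V' ≤ WIJ n i (2*n - i) := hV'sub.trans (WIJ_mono_left _ _ (Nat.sub_le i 1))
  have hV'P : V' ≤ sperp n V' ⊓ WIJ n i (2*n - i) := le_inf hV'iso hV'W
  have hP : Module.finrank ℂ (sperp n V' ⊓ WIJ n i (2*n - i) : Submodule ℂ (Wsp n)) +
      Module.finrank ℂ V' = 2 * i := by
    rw [sperp_eq_orthogonal, ← finrank_WIJ hin]
    exact LinearMap.BilinForm.finrank_orthogonal_inf_add_finrank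
      (symplecticForm_nondegenerate n) (symplecticForm_isAlt n).isRefl
      ((disjoint_WIJ_orthogonal n i).mono_left hV'W)
  have hsource :
      {V | V' ≤ V ∧ V ≤ WIJ n i (2*n - i) ∧ Module.finrank ℂ V = i ∧ IsIsotropic n V} =
      {V | V' ≤ V ∧ V ≤ sperp n V' ⊓ WIJ n i (2*n - i) ∧
        Module.finrank ℂ V = Module.finrank ℂ V' + 1} := by
    ext V
    constructor
    · rintro ⟨hV'V, hVW, hV, hViso⟩
      have hVperp := (isIsotropic_iff_le_sperp_of_le hV'iso hV'V (by omega)).1 hViso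
      exact ⟨hV'V, le_inf hVperp hVW, by omega⟩
    · rintro ⟨hV'V, hVP, hV⟩
      have hViso := (isIsotropic_iff_le_sperp_of_le hV'iso hV'V hV.le).2 (hVP.trans inf_le_left)
      exact ⟨hV'V, hVP.trans inf_le_right, by omega, hViso⟩
  refine ⟨?_, hsource ▸ Submodule.bijOn_map_mkQ hV'P 1⟩
  have := Submodule.finrank_map_mkQ_add_finrank hV'P
  omega

theorem statement2 (n i : ℕ) (hn : 1 ≤ n) (hi2 : 2 ≤ i) (hin : i ≤ n)
    (V' : Submodule ℂ (Wsp n)) (hV'sub : V' ≤ WIJ n (i - 1) (2*n - i))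
    (hV'dim : Module.finrank ℂ V' = i - 1) (hV'iso : IsIsotropic n V') :
    Module.finrank ℂ
        (Submodule.map V'.mkQ (sperp n V' ⊓ WIJ n i (2*n - i))) = 2 ∧
      Set.BijOn (fun V : Submodule ℂ (Wsp n) => Submodule.map V'.mkQ V)
        {V | V' ≤ V ∧ V ≤ WIJ n i (2*n - i) ∧ Module.finrank ℂ V = i ∧ IsIsotropic n V}
        {L | L ≤ Submodule.map V'.mkQ (sperp n V' ⊓ WIJ n i (2*n - i)) ∧
          Module.finrank ℂ L = 1} :=
  statement2_general n i hi2 hin V' hV'sub hV'dim hV'iso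

end
end
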